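/- For every x ∈ 𝔲_{14} and every y ∈ 𝔲, the element x ∧ y of Λ²𝔲 lies in Im(d3). -/

import Mathlib

/-- Index type with four consecutive blocks of sizes `n 0, n 1, n 2, n 3`
(corresponding to the partition `I1 ⊔ I2 ⊔ I3 ⊔ I4` of `{1, …, N}`). -/
abbrev BIdx (n : Fin 4 → ℕ) := Σ a : Fin 4, Fin (n a)

attribute [local instance 100] LieRing.ofAssociativeRing

/-- The Lie algebra `𝔲` of strictly block upper triangular matrices. -/
def uLie (n : Fin 4 → ℕ) (K : Type*) [Field K] :
    LieSubalgebra K (Matrix (BIdx n) (BIdx n) K) where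
  carrier := {M | ∀ (a b : Fin 4) (i : Fin (n a)) (j : Fin (n b)), b ≤ a → M ⟨a, i⟩ ⟨b, j⟩ = 0}
  add_mem' := by
    intro x y hx hy a b i j h
    simp [Matrix.add_apply, hx a b i j h, hy a b i j h]
  zero_mem' := by intro a b i j h; simp
  smul_mem' := by
    intro c x hx a b i j h
    simp [Matrix.smul_apply, hx a b i j h]
  lie_mem' := by
    intro x y hx hy a b i j h
    have key : ∀ u v : Matrix (BIdx n) (BIdx n) K,
        (∀ (a b : Fin 4) (i : Fin (n a)) (j : Fin (n b)), b ≤ a → u ⟨a, i⟩ ⟨b, j⟩ = 0) →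
        (∀ (a b : Fin 4) (i : Fin (n a)) (j : Fin (n b)), b ≤ a → v ⟨a, i⟩ ⟨b, j⟩ = 0) →
        (u * v) ⟨a, i⟩ ⟨b, j⟩ = 0 := by
      intro u v hu hv
      rw [Matrix.mul_apply]
      apply Finset.sum_eq_zero
      rintro ⟨c, kk⟩ -
      by_cases hc : c ≤ a
      · rw [hu a c i kk hc, zero_mul]
      · rw [hv c b kk j (h.trans (le_of_not_ge hc)), mul_zero]
    rw [Ring.lie_def, Matrix.sub_apply, key x y hx hy, key y x hy hx, sub_zero]

/-- The type of elements of `𝔲`. -/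
abbrev UU (n : Fin 4 → ℕ) (K : Type*) [Field K] := ↥(uLie n K)

/-- `x ∧ y`, as an element of the second exterior power `⋀[K]^2 𝔲`. -/
noncomputable def wedge {n : Fin 4 → ℕ} {K : Type*} [Field K] (x y : UU n K) :
    ↥(⋀[K]^2 (UU n K)) :=
  ⟨ExteriorAlgebra.ιMulti K 2 ![x, y], ExteriorAlgebra.ιMulti_range K 2 ⟨![x, y], rfl⟩⟩

/-- `x` is supported on the `(a, b)` block. -/
def inBlock {n : Fin 4 → ℕ} {K : Type*} [Field K] (a b : Fin 4) (x : UU n K) : Prop :=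
  ∀ (c d : Fin 4) (i : Fin (n c)) (j : Fin (n d)), ¬(c = a ∧ d = b) →
    (x : Matrix (BIdx n) (BIdx n) K) ⟨c, i⟩ ⟨d, j⟩ = 0

/-- The image of the Chevalley–Eilenberg differential `d3 : Λ³𝔲 → Λ²𝔲`: the span of all
`z ∧ [x,y] + y ∧ [z,x] + x ∧ [y,z]`. -/
noncomputable def Imd3 (n : Fin 4 → ℕ) (K : Type*) [Field K] :
    Submodule K ↥(⋀[K]^2 (UU n K)) :=
  Submodule.span K
    {w | ∃ x y z : UU n K, w = wedge z ⁅x, y⁆ + wedge y ⁅z, x⁆ + wedge x ⁅y, z⁆}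

/-!
Every `x ∈ 𝔲₁₄` is a combination of elementary matrices `E_rs` (`r ∈ I₁`, `s ∈ I₄`), and every
`y ∈ 𝔲` of elementary matrices `E_r's'`, so by bilinearity it suffices to treat
`E_rs ∧ E_r's'`. Choose `m ∈ I₂` different from `r'` and `s'` (possible since `|I₂| ≥ 3`).
Then `E_rs = [E_rm, E_ms]`, while `E_r's'` commutes with both `E_rm` and `E_ms`, so the cocycle
expression for `(E_rm, E_ms, E_r's')` collapses to `E_r's' ∧ E_rs`.
-/

theorem LinearMap.apply_mem_of_mem_span₂ {R M N P : Type*} [CommSemiring R]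
    [AddCommMonoid M] [AddCommMonoid N] [AddCommMonoid P] [Module R M] [Module R N] [Module R P]
    (f : M →ₗ[R] N →ₗ[R] P) {W : Submodule R P} {s : Set M} {t : Set N}
    (hst : ∀ a ∈ s, ∀ b ∈ t, f a b ∈ W) {x : M} {y : N}
    (hx : x ∈ Submodule.span R s) (hy : y ∈ Submodule.span R t) : f x y ∈ W := by
  have hxy := Submodule.apply_mem_map₂ f hx hy
  rw [Submodule.map₂_span_span] at hxy
  exact Submodule.span_le.mpr (by rintro _ ⟨a, ha, b, hb, rfl⟩; exact hst a ha b hb) hxy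

section

variable {n : Fin 4 → ℕ} {K : Type*} [Field K]

open ExteriorAlgebra in
theorem coe_wedge (x y : UU n K) :
    (wedge x y : ExteriorAlgebra K (UU n K)) = ι K x * ι K y := by
  simp [wedge, ιMulti_apply]

theorem wedge_comm (x y : UU n K) : wedge y x = -wedge x y :=
  Subtype.ext <| by
    simpa [coe_wedge] using
      eq_neg_of_add_eq_zero_right (ExteriorAlgebra.ι_add_mul_swap (R := K) x y)

noncomputable def wedgeBilin : UU n K →ₗ[K] UU n K →ₗ[K] ↥(⋀[K]^2 (UU n K)) :=
  LinearMap.mk₂ K wedge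
    (fun _ _ _ => Subtype.ext <| by simp [coe_wedge, add_mul])
    (fun _ _ _ => Subtype.ext <| by simp [coe_wedge])
    (fun _ _ _ => Subtype.ext <| by simp [coe_wedge, mul_add])
    (fun _ _ _ => Subtype.ext <| by simp [coe_wedge])

theorem wedgeBilin_apply (x y : UU n K) : wedgeBilin x y = wedge x y := rfl

@[simp]
theorem wedge_zero (x : UU n K) : wedge x 0 = 0 := (wedgeBilin x).map_zero

namespace uLie

def single (r s : BIdx n) (h : r.1 < s.1) : UU n K :=
  ⟨Matrix.single r s 1, fun _ _ _ _ hba =>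
    Matrix.single_apply_of_ne _ _ _ _ _ fun ⟨hr, hs⟩ => by subst hr hs; exact h.not_ge hba⟩

@[simp]
theorem coe_single (r s : BIdx n) (h : r.1 < s.1) :
    ((single r s h : UU n K) : Matrix (BIdx n) (BIdx n) K) = Matrix.single r s 1 := rfl

theorem lie_single_single (r m s : BIdx n) (hrm : r.1 < m.1) (hms : m.1 < s.1) :
    ⁅(single r m hrm : UU n K), single m s hms⁆ = (single r s (hrm.trans hms) : UU n K) := by
  have hsr : s ≠ r := fun h => (hrm.trans hms).ne' (congrArg Sigma.fst h)
  ext1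
  rw [LieSubalgebra.coe_bracket, Ring.lie_def, coe_single, coe_single, coe_single,
    Matrix.single_mul_single_same, Matrix.single_mul_single_of_ne (h := hsr), one_mul, sub_zero]

theorem lie_single_single_of_ne {a b c d : BIdx n} (hab : a.1 < b.1) (hcd : c.1 < d.1)
    (hbc : b ≠ c) (hda : d ≠ a) :
    ⁅(single a b hab : UU n K), single c d hcd⁆ = (0 : UU n K) := by
  ext1
  rw [LieSubalgebra.coe_bracket, Ring.lie_def, coe_single, coe_single,
    Matrix.single_mul_single_of_ne (h := hbc), Matrix.single_mul_single_of_ne (h := hda),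
    sub_zero, ZeroMemClass.coe_zero]

theorem apply_eq_zero (x : UU n K) {r s : BIdx n} (h : s.1 ≤ r.1) :
    (x : Matrix (BIdx n) (BIdx n) K) r s = 0 :=
  x.2 r.1 s.1 r.2 s.2 h

theorem eq_sum_single (x : UU n K) :
    x = ∑ r : BIdx n, ∑ s : BIdx n,
      if h : r.1 < s.1 then (x : Matrix (BIdx n) (BIdx n) K) r s • single r s h else 0 := by
  ext1
  conv_lhs => rw [Matrix.matrix_eq_sum_single (x : Matrix (BIdx n) (BIdx n) K)]
  push_cast
  refine Finset.sum_congr rfl fun r _ => Finset.sum_congr rfl fun s _ => ?_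
  split_ifs with h
  · simp [Matrix.smul_single]
  · simp [apply_eq_zero x (not_lt.mp h)]

theorem mem_span_single (x : UU n K) :
    x ∈ Submodule.span K {v | ∃ r s : BIdx n, ∃ h : r.1 < s.1,
      (x : Matrix (BIdx n) (BIdx n) K) r s ≠ 0 ∧ v = single r s h} := by
  conv => enter [2]; rw [eq_sum_single x]
  refine sum_mem fun r _ => sum_mem fun s _ => ?_
  split_ifs with h
  · by_cases hrs : (x : Matrix (BIdx n) (BIdx n) K) r s = 0
    · simp [hrs]
    · exact Submodule.smul_mem _ _ (Submodule.subset_span ⟨r, s, h, hrs, rfl⟩)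
  · exact Submodule.zero_mem _

end uLie

theorem wedge_lie_mem_Imd3 {x y z : UU n K} (hzx : ⁅z, x⁆ = 0) (hyz : ⁅y, z⁆ = 0) :
    wedge z ⁅x, y⁆ ∈ Imd3 n K := by
  have hcocycle : wedge z ⁅x, y⁆ + wedge y ⁅z, x⁆ + wedge x ⁅y, z⁆ ∈ Imd3 n K :=
    Submodule.subset_span ⟨x, y, z, rfl⟩
  simpa [hzx, hyz] using hcocycle

open uLie in
theorem wedge_single_single_mem_Imd3 {r m s r' s' : BIdx n} (hrm : r.1 < m.1) (hms : m.1 < s.1)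
    (h' : r'.1 < s'.1) (hs'r : s' ≠ r) (hsr' : s ≠ r') (hmr' : m ≠ r') (hms' : m ≠ s') :
    wedge (single r s (hrm.trans hms)) (single r' s' h' : UU n K) ∈ Imd3 n K := by
  have hmem := wedge_lie_mem_Imd3 (lie_single_single_of_ne (K := K) h' hrm hs'r hmr')
    (lie_single_single_of_ne hms h' hsr' hms'.symm)
  rw [lie_single_single, wedge_comm] at hmem
  exact neg_mem_iff.mp hmem

theorem Function.Injective.exists_ne_ne_of_two_lt {β : Type*} {m : ℕ} {f : Fin m → β}
    (hf : Function.Injective f) (hm : 2 < m) (a b : β) : ∃ k, f k ≠ a ∧ f k ≠ b := by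
  have : Nonempty (Fin m) := ⟨⟨0, by omega⟩⟩
  obtain ⟨k, hka, hkb⟩ :=
    Fin.exists_ne_and_ne_of_two_lt (Function.invFun f a) (Function.invFun f b) hm
  refine ⟨k, fun h => hka ?_, fun h => hkb ?_⟩ <;>
    exact h ▸ (Function.leftInverse_invFun hf k).symm

theorem exists_fst_eq_ne_ne {c : Fin 4} (hc : 3 ≤ n c) (a b : BIdx n) :
    ∃ m : BIdx n, m.1 = c ∧ m ≠ a ∧ m ≠ b := by
  obtain ⟨i, hia, hib⟩ :=
    (sigma_mk_injective (β := fun a => Fin (n a)) (i := c)).exists_ne_ne_of_two_lt hc a b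
  exact ⟨⟨c, i⟩, rfl, hia, hib⟩

open uLie in
theorem wedge_single_mem_Imd3_of_fst_eq (hn : 3 ≤ n 1) {r s r' s' : BIdx n} (hr : r.1 = 0)
    (hs : s.1 = 3) (h : r.1 < s.1) (h' : r'.1 < s'.1) :
    wedge (single r s h) (single r' s' h' : UU n K) ∈ Imd3 n K := by
  obtain ⟨m, hm, hmr', hms'⟩ := exists_fst_eq_ne_ne hn r' s'
  have hrm : r.1 < m.1 := by rw [hr, hm]; decide
  have hms : m.1 < s.1 := by rw [hs, hm]; decide
  have hs'r : s' ≠ r := fun e => by subst e; omega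
  have hsr' : s ≠ r' := fun e => by subst e; omega
  exact wedge_single_single_mem_Imd3 hrm hms h' hs'r hsr' hmr' hms'

end

theorem stmt_13_general (n : Fin 4 → ℕ) (h1 : 3 ≤ n 1) (K : Type*) [Field K] :
    ∀ x y : UU n K, inBlock 0 3 x → wedge x y ∈ Imd3 n K := by
  intro x y hx
  rw [← wedgeBilin_apply]
  refine wedgeBilin.apply_mem_of_mem_span₂ ?_ (uLie.mem_span_single x) (uLie.mem_span_single y)
  rintro _ ⟨r, s, h, hrs, rfl⟩ _ ⟨r', s', h', -, rfl⟩
  obtain ⟨hr, hs⟩ : r.1 = 0 ∧ s.1 = 3 := by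
    by_contra hb
    exact hrs (hx r.1 s.1 r.2 s.2 hb)
  exact wedge_single_mem_Imd3_of_fst_eq h1 hr hs h h'

/-- For every `x ∈ 𝔲_{14}` (block `(0,3)`) and every `y ∈ 𝔲`, the element `x ∧ y` of
`Λ²𝔲` lies in `Im(d3)`. -/
theorem stmt_13 (n : Fin 4 → ℕ) (h0 : 1 ≤ n 0) (h1 : 3 ≤ n 1) (h2 : 3 ≤ n 2)
    (h3 : 1 ≤ n 3) (K : Type*) [Field K] :
    ∀ x y : UU n K, inBlock 0 3 x → wedge x y ∈ Imd3 n K :=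
  stmt_13_general n h1 K
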